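/- Let q = ρ ∧ q₁ ∧ … ∧ qₙ be a 𝒬[◇]-query in normal form (ρ a finite set of atoms, each qᵢ a path ◇-query starting with ◇) and let q′ be a path ◇-query. If q ⊨ q′, then there exists an index i with 1 ≤ i ≤ n such that ρ ∧ qᵢ ⊨ q′. -/

import Mathlib

/-- Atoms are natural numbers (a countably infinite supply). -/
abbrev Atom : Type := ℕ

/-- A (temporal) data instance: a finite set of facts `(A, ℓ)`, i.e. `A(ℓ)`. -/
abbrev Inst : Type := Finset (Atom × ℕ)

/-- LTL queries built from atoms and ⊤ using ∧, ○ (next) and ◇ (strict eventually). -/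
inductive Query : Type where
  | top : Query
  | atom : Atom → Query
  | and : Query → Query → Query
  | next : Query → Query
  | evtl : Query → Query
  deriving DecidableEq

/-- Strict semantics: `Query.sat D q m` says `D, m ⊨ q`. -/
def Query.sat (D : Inst) : Query → ℕ → Prop
  | .top, _ => True
  | .atom a, m => (a, m) ∈ D
  | .and q₁ q₂, m => Query.sat D q₁ m ∧ Query.sat D q₂ m
  | .next q, m => Query.sat D q (m + 1)
  | .evtl q, m => ∃ m', m < m' ∧ Query.sat D q m'

/-- `q ⊨ q'`: every (nonempty) data instance satisfying `q` at 0 satisfies `q'` at 0. -/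
def Entails (q q' : Query) : Prop :=
  ∀ D : Inst, D.Nonempty → Query.sat D q 0 → Query.sat D q' 0

/-- `q ≡ q'`. -/
def QEquiv (q q' : Query) : Prop := Entails q q' ∧ Entails q' q

/-- Temporal operators ○ (next) and ◇ (eventually). -/
inductive TOp : Type where
  | next : TOp
  | evtl : TOp
  deriving DecidableEq

def TOp.apply : TOp → Query → Query
  | .next, q => Query.next q
  | .evtl, q => Query.evtl q

/-- Conjunction of a finite set of atoms (the empty set standing for ⊤). -/
noncomputable def conjQ (ρ : Finset Atom) : Query :=
  ρ.toList.foldr (fun a q => Query.and (Query.atom a) q) Query.top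

/-- `pathFrom ρ o i k` is the path query `ρᵢ ∧ o_{i+1}(ρ_{i+1} ∧ ⋯ ∧ o_{i+k} ρ_{i+k})`. -/
noncomputable def pathFrom (ρ : ℕ → Finset Atom) (o : ℕ → TOp) : ℕ → ℕ → Query
  | i, 0 => conjQ (ρ i)
  | i, k + 1 => Query.and (conjQ (ρ i)) ((o (i + 1)).apply (pathFrom ρ o (i + 1) k))

/-- The path ○◇-query `ρ₀ ∧ o₁(ρ₁ ∧ ⋯ ∧ oₙ ρₙ)`. -/
noncomputable def pathQ (n : ℕ) (ρ : ℕ → Finset Atom) (o : ℕ → TOp) : Query := pathFrom ρ o 0 n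

/-- `q` separates the example set `(E⁺, E⁻)`. -/
def Separates (Ep En : Finset Inst) (q : Query) : Prop :=
  (∀ D ∈ Ep, Query.sat D q 0) ∧ ∀ D ∈ En, ¬ Query.sat D q 0

/-- Conjunction of a list of queries (empty conjunction = ⊤). -/
def bigAnd : List Query → Query
  | [] => Query.top
  | q :: qs => Query.and q (bigAnd qs)


namespace St2

lemma sat_foldr (D : Inst) (l : List Atom) (t : ℕ) :
    Query.sat D (l.foldr (fun a q => Query.and (Query.atom a) q) Query.top) t ↔
      ∀ a ∈ l, (a, t) ∈ D := by
  induction l with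
  | nil => simp [Query.sat]
  | cons a l ih => simp [Query.sat, ih]

lemma sat_conjQ (D : Inst) (s : Finset Atom) (t : ℕ) :
    Query.sat D (conjQ s) t ↔ ∀ a ∈ s, (a, t) ∈ D := by
  rw [conjQ, sat_foldr]
  constructor
  · intro h a ha; exact h a (by simpa using ha)
  · intro h a ha; exact h a (by simpa using ha)

lemma sat_bigAnd (D : Inst) (l : List Query) (t : ℕ) :
    Query.sat D (bigAnd l) t ↔ ∀ q ∈ l, Query.sat D q t := by
  induction l with
  | nil => simp [bigAnd, Query.sat]
  | cons q l ih => simp [bigAnd, Query.sat, ih]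

/-- Characterization of satisfaction of a pure-◇ path query by a witness chain. -/
lemma char (D : Inst) (σ : ℕ → Finset Atom) :
    ∀ (r i t : ℕ), Query.sat D (pathFrom σ (fun _ => TOp.evtl) i r) t ↔
      ∃ g : ℕ → ℕ, g 0 = t ∧ (∀ l, l < r → g l < g (l + 1)) ∧
        (∀ l, l ≤ r → ∀ a ∈ σ (i + l), (a, g l) ∈ D) := by
  intro r
  induction r with
  | zero =>
    intro i t
    simp only [pathFrom, sat_conjQ]
    constructor
    · intro h
      refine ⟨fun _ => t, rfl, by omega, ?_⟩
      intro l hl a ha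
      interval_cases l
      simpa using h a ha
    · rintro ⟨g, hg0, _, hg⟩ a ha
      have := hg 0 (by omega) a (by simpa using ha)
      rwa [hg0] at this
  | succ r ih =>
    intro i t
    simp only [pathFrom, TOp.apply, Query.sat, sat_conjQ]
    constructor
    · rintro ⟨h0, t', ht', hs⟩
      obtain ⟨g', hg0, hginc, hgc⟩ := (ih (i + 1) t').1 hs
      refine ⟨fun l => if l = 0 then t else g' (l - 1), by simp, ?_, ?_⟩
      · intro l hl
        rcases Nat.eq_zero_or_pos l with rfl | hp
        · simpa [hg0] using ht'
        · have h1 : ¬ (l = 0) := by omega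
          have h2 : ¬ (l + 1 = 0) := by omega
          simp only [h1, h2, if_false]
          have := hginc (l - 1) (by omega)
          have e : l - 1 + 1 = l + 1 - 1 := by omega
          rwa [e] at this
      · intro l hl a ha
        rcases Nat.eq_zero_or_pos l with rfl | hp
        · simpa using h0 a (by simpa using ha)
        · have h1 : ¬ (l = 0) := by omega
          simp only [h1, if_false]
          refine hgc (l - 1) (by omega) a ?_
          have e : i + 1 + (l - 1) = i + l := by omega
          rwa [e]
    · rintro ⟨g, hg0, hginc, hgc⟩
      refine ⟨?_, g 1, ?_, ?_⟩
      · intro a ha; have := hgc 0 (by omega) a (by simpa using ha); rwa [hg0] at this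
      · rw [← hg0]; exact hginc 0 (by omega)
      · refine (ih (i + 1) (g 1)).2 ⟨fun l => g (l + 1), rfl, ?_, ?_⟩
        · intro l hl; exact hginc (l + 1) (by omega)
        · intro l hl a ha
          refine hgc (l + 1) (by omega) a ?_
          have e : i + (l + 1) = i + 1 + l := by omega
          rwa [e]


noncomputable def instOf (ρ : Finset Atom) (w : List (Finset Atom)) : Inst :=
  (ρ.image (fun a => (a, 0))) ∪
    (Finset.range w.length).biUnion (fun p => (w.getD p ∅).image (fun a => (a, p + 1)))

lemma mem_instOf_zero (ρ : Finset Atom) (w : List (Finset Atom)) (a : Atom) :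
    (a, 0) ∈ instOf ρ w ↔ a ∈ ρ := by
  simp only [instOf, Finset.mem_union, Finset.mem_image, Finset.mem_biUnion, Finset.mem_range,
    Prod.mk.injEq]
  constructor
  · rintro (⟨b, hb, rfl, -⟩ | ⟨p, _, b, _, _, he⟩)
    · exact hb
    · omega
  · intro h; exact Or.inl ⟨a, h, rfl, trivial⟩

lemma mem_instOf_succ (ρ : Finset Atom) (w : List (Finset Atom)) (a : Atom) (p : ℕ) :
    (a, p + 1) ∈ instOf ρ w ↔ a ∈ w.getD p ∅ := by
  simp only [instOf, Finset.mem_union, Finset.mem_image, Finset.mem_biUnion, Finset.mem_range,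
    Prod.mk.injEq]
  constructor
  · rintro (⟨b, hb, _, he⟩ | ⟨q, hq, b, hb, rfl, he⟩)
    · omega
    · have : q = p := by omega
      subst this; exact hb
  · intro h
    have hp : p < w.length := by
      by_contra hc
      rw [List.getD_eq_default _ _ (by omega)] at h
      simp at h
    exact Or.inr ⟨p, hp, a, h, rfl, rfl⟩

def EmbL (l L : List (Finset Atom)) : Prop :=
  ∃ f : ℕ → ℕ, StrictMono f ∧ ∀ p, l.getD p ∅ ⊆ L.getD (f p) ∅

def Ple (l L : List (Finset Atom)) : Prop :=
  ∃ L', List.Forall₂ (· ⊆ ·) l L' ∧ List.Sublist L' L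

lemma ple_refl (l : List (Finset Atom)) : Ple l l :=
  ⟨l, List.forall₂_same.2 (fun _ _ => le_refl _), List.Sublist.refl l⟩

lemma ple_nil (L : List (Finset Atom)) : Ple [] L := ⟨[], List.Forall₂.nil, List.nil_sublist L⟩

lemma ple_append {l₁ l₂ L₁ L₂ : List (Finset Atom)} (h₁ : Ple l₁ L₁) (h₂ : Ple l₂ L₂) :
    Ple (l₁ ++ l₂) (L₁ ++ L₂) := by
  obtain ⟨M₁, hf₁, hs₁⟩ := h₁
  obtain ⟨M₂, hf₂, hs₂⟩ := h₂
  exact ⟨M₁ ++ M₂, List.rel_append hf₁ hf₂, List.Sublist.append hs₁ hs₂⟩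

lemma ple_extend_left {l L : List (Finset Atom)} (A : List (Finset Atom)) (h : Ple l L) :
    Ple l (A ++ L) := by
  obtain ⟨M, hf, hs⟩ := h
  exact ⟨M, hf, hs.trans (List.sublist_append_right A L)⟩

lemma ple_extend_right {l L : List (Finset Atom)} (C : List (Finset Atom)) (h : Ple l L) :
    Ple l (L ++ C) := by
  obtain ⟨M, hf, hs⟩ := h
  exact ⟨M, hf, hs.trans (List.sublist_append_left L C)⟩

lemma ple_singleton {s t : Finset Atom} (h : s ⊆ t) : Ple [s] [t] :=
  ⟨[t], List.Forall₂.cons h List.Forall₂.nil, List.Sublist.refl _⟩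

lemma ple_flatMap {α : Type} {i : α} {is : List α} (f : α → List (Finset Atom)) (hi : i ∈ is) :
    Ple (f i) (is.flatMap f) := by
  induction is with
  | nil => cases hi
  | cons j js ih =>
    rw [List.flatMap_cons]
    rcases List.mem_cons.1 hi with rfl | hmem
    · exact ple_extend_right _ (ple_refl _)
    · exact ple_extend_left _ (ih hmem)

lemma embL_of_sublist {l L : List (Finset Atom)} (h : List.Sublist l L) : EmbL l L := by
  induction h with
  | slnil => exact ⟨id, strictMono_id, by intro p; simp⟩
  | cons a h ih =>
    obtain ⟨f, hf, hc⟩ := ih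
    exact ⟨fun p => f p + 1, fun x y hxy => by simpa using hf hxy, fun p => by
      simpa [List.getD_cons_succ] using hc p⟩
  | cons_cons a h ih =>
    obtain ⟨f, hf, hc⟩ := ih
    refine ⟨fun p => if p = 0 then 0 else f (p - 1) + 1, ?_, ?_⟩
    · apply strictMono_nat_of_lt_succ
      intro n
      rcases Nat.eq_zero_or_pos n with rfl | hp
      · simp
      · have h1 : ¬ (n = 0) := by omega
        have h2 : ¬ (n + 1 = 0) := by omega
        simp only [h1, h2, if_false]
        have := hf (show n - 1 < n + 1 - 1 by omega)
        omega
    · intro p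
      rcases Nat.eq_zero_or_pos p with rfl | hp
      · simp
      · have h1 : ¬ (p = 0) := by omega
        simp only [h1, if_false]
        rcases Nat.exists_eq_add_of_le hp with ⟨q, rfl⟩
        rw [Nat.add_comm 1 q]
        rw [List.getD_cons_succ, List.getD_cons_succ]
        simpa using hc q

lemma forall₂_getD {l L : List (Finset Atom)} (h : List.Forall₂ (· ⊆ ·) l L) (p : ℕ) :
    l.getD p ∅ ⊆ L.getD p ∅ := by
  induction h generalizing p with
  | nil => simp
  | cons hab h ih =>
    rcases Nat.eq_zero_or_pos p with rfl | hp
    · simpa using hab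
    · rcases Nat.exists_eq_add_of_le hp with ⟨q, rfl⟩
      rw [Nat.add_comm 1 q, List.getD_cons_succ, List.getD_cons_succ]
      exact ih q

lemma embL_of_ple {l L : List (Finset Atom)} (h : Ple l L) : EmbL l L := by
  obtain ⟨M, hf, hs⟩ := h
  obtain ⟨g, hg, hgc⟩ := embL_of_sublist hs
  exact ⟨g, hg, fun p => (forall₂_getD hf p).trans (hgc p)⟩


def cF (N : ℕ) (P : ℕ → Finset Atom) (t : ℕ) : Finset Atom :=
  if 1 ≤ t ∧ t ≤ N then P t else ∅

def GoodPkg (c : ℕ → Finset Atom) (Nb : ℕ) (ρ' : ℕ → Finset Atom) (j : ℕ) : Prop :=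
  ∃ τ : ℕ → ℕ, τ 0 = 0 ∧ (∀ l, l < j → τ l < τ (l + 1)) ∧
    (∀ l, 1 ≤ l → l ≤ j → ρ' l ⊆ c (τ l)) ∧
    (∀ l, 1 ≤ l → l ≤ j → ∀ t, τ (l - 1) < t → t < τ l → ¬ ρ' l ⊆ c t) ∧
    (∀ l, l ≤ j → τ l ≤ Nb + l)

def StallPkg (c : ℕ → Finset Atom) (Nb m : ℕ) (ρ' : ℕ → Finset Atom) : Prop :=
  ∃ β, 1 ≤ β ∧ β ≤ m ∧ ρ' β ≠ ∅ ∧ ∃ τ : ℕ → ℕ, τ 0 = 0 ∧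
    (∀ l, l + 1 ≤ β - 1 → τ l < τ (l + 1)) ∧
    (∀ l, 1 ≤ l → l ≤ β - 1 → ∀ t, τ (l - 1) < t → t < τ l → ¬ ρ' l ⊆ c t) ∧
    (∀ t, τ (β - 1) < t → ¬ ρ' β ⊆ c t) ∧
    (∀ l, l ≤ β - 1 → τ l ≤ Nb + l)

lemma good_or_stall (c : ℕ → Finset Atom) (Nb m : ℕ) (ρ' : ℕ → Finset Atom)
    (hc : ∀ t, Nb < t → c t = ∅) :
    ∀ j, j ≤ m → GoodPkg c Nb ρ' j ∨ StallPkg c Nb m ρ' := by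
  intro j
  induction j with
  | zero =>
    intro _
    refine Or.inl ⟨fun _ => 0, rfl, by omega, by omega, by omega, ?_⟩
    intro l _; simp
  | succ j ih =>
    intro hj
    rcases ih (by omega) with good | stall
    swap
    · exact Or.inr stall
    obtain ⟨τ, hτ0, hmono, hwit, hgap, hbd⟩ := good
    have step : ∀ v, τ j < v → ρ' (j + 1) ⊆ c v →
        (∀ t, τ j < t → t < v → ¬ ρ' (j + 1) ⊆ c t) → v ≤ Nb + (j + 1) →
        GoodPkg c Nb ρ' (j + 1) := by
      intro v hv1 hv2 hv3 hv4
      refine ⟨Function.update τ (j + 1) v, ?_, ?_, ?_, ?_, ?_⟩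
      · rw [Function.update_of_ne (by omega)]; exact hτ0
      · intro l hl
        rcases Nat.lt_or_ge l j with h | h
        · rw [Function.update_of_ne (by omega), Function.update_of_ne (by omega)]
          exact hmono l h
        · have hlj : l = j := by omega
          rw [hlj, Function.update_of_ne (by omega), Function.update_self]
          exact hv1
      · intro l h1 h2
        rcases Nat.lt_or_ge j l with h | h
        · have hlj : l = j + 1 := by omega
          rw [hlj, Function.update_self]
          exact hv2
        · rw [Function.update_of_ne (by omega)]
          exact hwit l h1 h
      · intro l h1 h2 t ht1 ht2
        rcases Nat.lt_or_ge j l with h | h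
        · have hlj : l = j + 1 := by omega
          rw [hlj] at ht1 ht2 ⊢
          rw [Function.update_self] at ht2
          rw [show j + 1 - 1 = j by omega, Function.update_of_ne (by omega)] at ht1
          exact hv3 t ht1 ht2
        · rw [Function.update_of_ne (by omega)] at ht2
          rw [Function.update_of_ne (by omega)] at ht1
          exact hgap l h1 h t ht1 ht2
      · intro l hl
        rcases Nat.lt_or_ge j l with h | h
        · have hlj : l = j + 1 := by omega
          rw [hlj, Function.update_self]
          exact hv4
        · rw [Function.update_of_ne (by omega)]
          have := hbd l h
          omega
    by_cases hemp : ρ' (j + 1) = ∅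
    · refine Or.inl (step (τ j + 1) (by omega) (by simp [hemp]) (by omega) ?_)
      have := hbd j (le_refl j)
      omega
    · set S := (Finset.Icc (τ j + 1) Nb).filter (fun t => ρ' (j + 1) ⊆ c t) with hS
      by_cases hne : S.Nonempty
      · have ht'S : S.min' hne ∈ S := S.min'_mem hne
        have ht'bd : τ j + 1 ≤ S.min' hne ∧ S.min' hne ≤ Nb :=
          Finset.mem_Icc.1 (Finset.mem_filter.1 ht'S).1
        refine Or.inl (step (S.min' hne) (by omega) (Finset.mem_filter.1 ht'S).2 ?_ (by omega))
        intro t ht1 ht2 hsub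
        have htN : t ≤ Nb := by
          by_contra hcon
          rw [hc t (by omega)] at hsub
          exact hemp (Finset.subset_empty.1 hsub)
        have : t ∈ S := Finset.mem_filter.2 ⟨Finset.mem_Icc.2 ⟨by omega, htN⟩, hsub⟩
        have := S.min'_le t this
        omega
      · refine Or.inr ⟨j + 1, by omega, hj, hemp, τ, hτ0, ?_, ?_, ?_, ?_⟩
        · intro l hl
          exact hmono l (by omega)
        · intro l h1 h2 t ht1 ht2
          exact hgap l h1 (by omega) t ht1 ht2
        · intro t ht hsub
          have htN : t ≤ Nb := by
            by_contra hcon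
            rw [hc t (by omega)] at hsub
            exact hemp (Finset.subset_empty.1 hsub)
          refine hne ⟨t, Finset.mem_filter.2 ⟨Finset.mem_Icc.2 ⟨?_, htN⟩, hsub⟩⟩
          rw [show j + 1 - 1 = j by omega] at ht
          omega
        · intro l hl
          exact hbd l (by omega)


end St2
section
open St2
-- Lemma A: if the greedy embedding completes on the gap-1 canonical model of ρ ∧ qᵢ,
-- then ρ ∧ qᵢ ⊨ q'.
lemma entails_of_good (ρ : Finset Atom) (Nb m : ℕ) (P ρ' : ℕ → Finset Atom)
    (hρ0 : ρ' 0 ⊆ ρ)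
    (good : GoodPkg (cF Nb P) Nb ρ' m) :
    Entails (Query.and (conjQ ρ) (pathQ Nb P fun _ => TOp.evtl))
      (pathQ m ρ' fun _ => TOp.evtl) := by
  obtain ⟨τ, hτ0, hmono, hwit, -, -⟩ := good
  intro D _ hsat
  obtain ⟨hconj, hpath⟩ := hsat
  rw [pathQ] at hpath ⊢
  obtain ⟨g, hg0, hginc, hgc⟩ := (char D P Nb 0 0).1 hpath
  -- extend g beyond Nb
  set G : ℕ → ℕ := fun t => if t ≤ Nb then g t else g Nb + (t - Nb) with hG
  have hgmono : ∀ s t, s < t → t ≤ Nb → g s < g t := by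
    intro s t hst htN
    induction t with
    | zero => omega
    | succ t iht =>
      rcases Nat.lt_or_ge s t with h | h
      · exact lt_trans (iht h (by omega)) (hginc t (by omega))
      · have : s = t := by omega
        subst this
        exact hginc s (by omega)
  have hGmono : StrictMono G := by
    intro s t hst
    simp only [hG]
    rcases Nat.lt_or_ge Nb t with h1 | h1
    · rcases Nat.lt_or_ge Nb s with h2 | h2
      · simp only [show ¬ (s ≤ Nb) by omega, show ¬ (t ≤ Nb) by omega, if_false]
        omega
      · simp only [show s ≤ Nb from h2, if_true, show ¬ (t ≤ Nb) by omega, if_false]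
        have : g s ≤ g Nb := by
          rcases Nat.lt_or_ge s Nb with h3 | h3
          · exact le_of_lt (hgmono s Nb h3 (le_refl _))
          · have : s = Nb := by omega
            rw [this]
        omega
    · simp only [show s ≤ Nb by omega, show t ≤ Nb from h1, if_true]
      exact hgmono s t hst h1
  have hGc : ∀ t, ∀ a ∈ cF Nb P t, (a, G t) ∈ D := by
    intro t a ha
    rw [cF] at ha
    by_cases h : 1 ≤ t ∧ t ≤ Nb
    · simp only [h, if_true] at ha
      simp only [hG, show t ≤ Nb from h.2, if_true]
      exact hgc t h.2 a (by simpa using ha)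
    · simp [h] at ha
  refine (char D ρ' m 0 0).2 ⟨fun l => if l = 0 then 0 else G (τ l), by simp, ?_, ?_⟩
  · intro l hl
    rcases Nat.eq_zero_or_pos l with rfl | hp
    · beta_reduce
      rw [if_pos rfl, if_neg (by omega : ¬ (0 + 1 = 0))]
      have h1 : τ 0 < τ 1 := hmono 0 hl
      rw [hτ0] at h1
      have e0 : G 0 = 0 := by simp [hG, hg0]
      have e1 := hGmono h1
      simp only [show (0 : ℕ) + 1 = 1 from rfl]
      omega
    · beta_reduce
      rw [if_neg (by omega : ¬ (l = 0)), if_neg (by omega : ¬ (l + 1 = 0))]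
      exact hGmono (hmono l (by omega))
  · intro l hl a ha
    rcases Nat.eq_zero_or_pos l with rfl | hp
    · beta_reduce
      rw [if_pos rfl]
      have := (sat_conjQ D ρ 0).1 hconj
      exact this a (hρ0 (by simpa using ha))
    · beta_reduce
      rw [if_neg (by omega : ¬ (l = 0))]
      exact hGc (τ l) a (hwit l hp hl (by simpa using ha))
end
namespace St2
section Constr

variable (k : ℕ) (N : Fin k → ℕ) (P : Fin k → ℕ → Finset Atom) (ρ' : ℕ → Finset Atom)
variable (β : Fin k → ℕ) (τ : Fin k → ℕ → ℕ) (M B fresh : ℕ)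

/-- cells of block `i`. -/
def cI (i : Fin k) : ℕ → Finset Atom := cF (N i) (P i)

/-- cells of block `i` strictly between greedy witnesses `j-1` and `j`. -/
def segL (i : Fin k) (j : ℕ) : List (Finset Atom) :=
  (List.range' (τ i (j - 1) + 1) (τ i j - τ i (j - 1) - 1)).map (cI k N P i)

/-- cells of block `i` after its stall point (up to the global bound `M`). -/
def sufL (i : Fin k) : List (Finset Atom) :=
  (List.range' (τ i (β i - 1) + 1) (M - τ i (β i - 1))).map (cI k N P i)

/-- the `j`-th inter-column zone. -/
def gapL (j : ℕ) : List (Finset Atom) :=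
  (List.finRange k).flatMap (fun i =>
    if j + 1 ≤ β i then segL k N P τ i j else if j = β i then sufL k N P β τ M i else [])

/-- the `j`-th column: merged greedy witnesses. -/
def colF (j : ℕ) : Finset Atom :=
  Finset.univ.biUnion (fun i => if j + 1 ≤ β i then cI k N P i (τ i j) else ∅)

/-- cells of block `i` after witness `j-1` (whole tail). -/
def tailL (i : Fin k) (j : ℕ) : List (Finset Atom) :=
  (List.range' (τ i (j - 1) + 1) (M - τ i (j - 1))).map (cI k N P i)

/-- The merged word, laid out from zone `j` on (with `fuel = B - j`). -/
def Wrec : ℕ → ℕ → List (Finset Atom)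
  | 0, j => gapL k N P β τ M j ++ [{fresh}]
  | fuel + 1, j => gapL k N P β τ M j ++ colF k N P β τ j :: Wrec fuel (j + 1)

lemma mem_fresh_Wrec : ∀ fuel j, ({fresh} : Finset Atom) ∈ Wrec k N P β τ M fresh fuel j := by
  intro fuel
  induction fuel with
  | zero => intro j; rw [Wrec]; exact List.mem_append_right _ (List.mem_singleton.2 rfl)
  | succ fuel ih =>
    intro j
    rw [Wrec]
    exact List.mem_append_right _ (List.mem_cons_of_mem _ (ih (j + 1)))

end Constr
end St2
namespace St2
section Constr2

variable {k : ℕ} {N : Fin k → ℕ} {P : Fin k → ℕ → Finset Atom} {ρ' : ℕ → Finset Atom}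
variable {β : Fin k → ℕ} {τ : Fin k → ℕ → ℕ} {M B fresh m : ℕ}

/-- Zone invariant: no cell of zone `j` contains `ρ' j`. -/
lemma Pinv
    (hβ1 : ∀ i, 1 ≤ β i)
    (hmono : ∀ i l, l + 1 ≤ β i - 1 → τ i l < τ i (l + 1))
    (hgap : ∀ i l, 1 ≤ l → l ≤ β i - 1 → ∀ t, τ i (l - 1) < t → t < τ i l → ¬ ρ' l ⊆ cI k N P i t)
    (hstall : ∀ i t, τ i (β i - 1) < t → ¬ ρ' (β i) ⊆ cI k N P i t)
    (j : ℕ) (hj : 1 ≤ j) :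
    ∀ s ∈ gapL k N P β τ M j, ¬ ρ' j ⊆ s := by
  intro s hs
  rw [gapL, List.mem_flatMap] at hs
  obtain ⟨i, -, hmem⟩ := hs
  by_cases h1 : j + 1 ≤ β i
  · rw [if_pos h1] at hmem
    rw [segL, List.mem_map] at hmem
    obtain ⟨t, ht, rfl⟩ := hmem
    rw [List.mem_range'_1] at ht
    have hlt : τ i (j - 1) < τ i j := by
      have := hmono i (j - 1) (by omega)
      rwa [show j - 1 + 1 = j by omega] at this
    exact hgap i j hj (by omega) t (by omega) (by omega)
  · rw [if_neg h1] at hmem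
    by_cases h2 : j = β i
    · rw [if_pos h2] at hmem
      rw [sufL, List.mem_map] at hmem
      obtain ⟨t, ht, rfl⟩ := hmem
      rw [List.mem_range'_1] at ht
      subst h2
      exact hstall i t (by omega)
    · rw [if_neg h2] at hmem
      cases hmem

/-- The merged word does not allow an embedding of the tail `ρ' j, …, ρ' B` of `q'`. -/
lemma noemb
    (hβ1 : ∀ i, 1 ≤ β i)
    (hmono : ∀ i l, l + 1 ≤ β i - 1 → τ i l < τ i (l + 1))
    (hgap : ∀ i l, 1 ≤ l → l ≤ β i - 1 → ∀ t, τ i (l - 1) < t → t < τ i l → ¬ ρ' l ⊆ cI k N P i t)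
    (hstall : ∀ i t, τ i (β i - 1) < t → ¬ ρ' (β i) ⊆ cI k N P i t)
    (hρB : ρ' B ≠ ∅)
    (hfresh : ∀ a ∈ ρ' B, a < fresh) :
    ∀ fuel j, 1 ≤ j → j + fuel = B → ∀ g : ℕ → ℕ,
      (∀ l, l < fuel → g l < g (l + 1)) →
      (∀ l, l ≤ fuel → ρ' (j + l) ⊆ (Wrec k N P β τ M fresh fuel j).getD (g l) ∅) → False := by
  intro fuel
  induction fuel with
  | zero =>
    intro j hj1 hjB g _ hcont
    have h0 := hcont 0 (le_refl 0)
    have hjB' : j = B := by omega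
    rw [show j + 0 = j from rfl, hjB', Wrec] at h0
    set A := gapL k N P β τ M B with hA
    rcases Nat.lt_or_ge (g 0) A.length with hlt | hge
    · rw [List.getD_append _ _ _ _ hlt] at h0
      have hmem : A.getD (g 0) ∅ ∈ A := by
        rw [List.getD_eq_getElem _ _ hlt]; exact List.getElem_mem hlt
      exact Pinv hβ1 hmono hgap hstall B (by omega) _ hmem h0
    · rw [List.getD_append_right _ _ _ _ hge] at h0
      rcases Nat.eq_or_lt_of_le hge with heq | hlt2
      · rw [← heq, Nat.sub_self] at h0
        simp only [List.getD_cons_zero] at h0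
        obtain ⟨a, ha⟩ := Finset.nonempty_iff_ne_empty.2 hρB
        have e1 := h0 ha
        rw [Finset.mem_singleton] at e1
        have e2 := hfresh a ha
        exact absurd e1 (Nat.ne_of_lt e2)
      · have hlen : ([({fresh} : Finset Atom)] : List (Finset Atom)).length ≤ g 0 - A.length := by
          rw [List.length_singleton]; omega
        rw [List.getD_eq_default _ _ hlen] at h0
        exact hρB (Finset.subset_empty.1 h0)
  | succ fuel ih =>
    intro j hj1 hjB g hinc hcont
    have h0 := hcont 0 (by omega)
    rw [show j + 0 = j from rfl, Wrec] at h0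
    set A := gapL k N P β τ M j with hA
    rcases Nat.lt_or_ge (g 0) A.length with hlt | hge
    · rw [List.getD_append _ _ _ _ hlt] at h0
      have hmem : A.getD (g 0) ∅ ∈ A := by
        rw [List.getD_eq_getElem _ _ hlt]; exact List.getElem_mem hlt
      exact Pinv hβ1 hmono hgap hstall j hj1 _ hmem h0
    · -- all later witnesses live beyond the column
      have hmono2 : ∀ l, l ≤ fuel → A.length + l + 1 ≤ g (l + 1) := by
        intro l
        induction l with
        | zero => intro _; have := hinc 0 (by omega); omega
        | succ l ihl =>
          intro hl
          have := ihl (by omega)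
          have := hinc (l + 1) (by omega)
          omega
      refine ih (j + 1) (by omega) (by omega) (fun l => g (l + 1) - (A.length + 1)) ?_ ?_
      · intro l hl
        have h1 := hmono2 l (by omega)
        have h2 := hinc (l + 1) (by omega)
        beta_reduce
        omega
      · intro l hl
        have hc := hcont (l + 1) (by omega)
        rw [Wrec] at hc
        rw [← hA] at hc
        have hbig : A.length ≤ g (l + 1) := by have := hmono2 l hl; omega
        rw [List.getD_append_right _ _ _ _ hbig] at hc
        have : g (l + 1) - A.length = (g (l + 1) - (A.length + 1)) + 1 := by
          have := hmono2 l hl; omega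
        rw [this, List.getD_cons_succ] at hc
        rw [show j + 1 + l = j + (l + 1) by omega]
        exact hc

end Constr2
end St2
namespace St2
section Constr3

variable {k : ℕ} {N : Fin k → ℕ} {P : Fin k → ℕ → Finset Atom} {ρ' : ℕ → Finset Atom}
variable {β : Fin k → ℕ} {τ : Fin k → ℕ → ℕ} {M B fresh m : ℕ}

lemma range'_split (s n a : ℕ) (h : a ≤ n) :
    List.range' s n = List.range' s a ++ List.range' (s + a) (n - a) := by
  have := (List.range'_append_1 (s := s) (m := a) (n := n - a)).symm
  rw [show a + (n - a) = n by omega] at this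
  exact this

/-- Each block tail embeds (with containments) into the merged word. -/
lemma subW
    (hβ1 : ∀ i, 1 ≤ β i) (hβm : ∀ i, β i ≤ m)
    (hmono : ∀ i l, l + 1 ≤ β i - 1 → τ i l < τ i (l + 1))
    (hbd : ∀ i l, l ≤ β i - 1 → τ i l ≤ N i + l)
    (hB : ∀ i, β i ≤ B)
    (hM : ∀ i, N i + m < M) :
    ∀ fuel j, 1 ≤ j → j + fuel = B → ∀ i : Fin k, j ≤ β i →
      Ple (tailL k N P τ M i j) (Wrec k N P β τ M fresh fuel j) := by
  intro fuel
  induction fuel with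
  | zero =>
    intro j hj1 hjB i hjβ
    have hβB : β i = B := le_antisymm (hB i) (by omega)
    have he : tailL k N P τ M i j = sufL k N P β τ M i := by
      rw [tailL, sufL, hβB, show j + 0 = j from rfl] at *
      rw [show j - 1 = B - 1 by omega]
    rw [he, Wrec]
    refine ple_extend_right _ ?_
    have := ple_flatMap (i := i)
      (fun i' => if j + 1 ≤ β i' then segL k N P τ i' j else
        if j = β i' then sufL k N P β τ M i' else []) (List.mem_finRange i)
    beta_reduce at this
    rw [if_neg (show ¬ (j + 1 ≤ β i) by omega), if_pos (show j = β i by omega)] at this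
    rw [gapL]
    exact this
  | succ fuel ih =>
    intro j hj1 hjB i hjβ
    rw [Wrec]
    by_cases hcase : j = β i
    · have he : tailL k N P τ M i j = sufL k N P β τ M i := by
        rw [tailL, sufL, ← hcase]
      rw [he]
      refine ple_extend_right _ ?_
      have := ple_flatMap (i := i)
        (fun i' => if j + 1 ≤ β i' then segL k N P τ i' j else
          if j = β i' then sufL k N P β τ M i' else []) (List.mem_finRange i)
      beta_reduce at this
      rw [if_neg (show ¬ (j + 1 ≤ β i) by omega), if_pos (show j = β i from hcase)] at this
      rw [gapL]
      exact this
    · -- j < β i : decompose the tail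
      have hjβ' : j + 1 ≤ β i := by omega
      have hab : τ i (j - 1) < τ i j := by
        have := hmono i (j - 1) (by omega)
        rwa [show j - 1 + 1 = j by omega] at this
      have hbM : τ i j < M := by
        have h1 := hbd i j (by omega)
        have h2 := hM i
        have h3 := hβm i
        omega
      have hdec : tailL k N P τ M i j =
          segL k N P τ i j ++ ([cI k N P i (τ i j)] ++ tailL k N P τ M i (j + 1)) := by
        rw [tailL, segL, tailL, show j + 1 - 1 = j from rfl]
        rw [range'_split (τ i (j - 1) + 1) (M - τ i (j - 1)) (τ i j - τ i (j - 1) - 1) (by omega),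
          List.map_append]
        congr 1
        rw [show τ i (j - 1) + 1 + (τ i j - τ i (j - 1) - 1) = τ i j by omega,
          show M - τ i (j - 1) - (τ i j - τ i (j - 1) - 1) = M - τ i j + 1 by omega,
          range'_split (τ i j) (M - τ i j + 1) 1 (by omega), List.map_append,
          show M - τ i j + 1 - 1 = M - τ i j by omega]
        rfl
      rw [hdec]
      show Ple _ (gapL k N P β τ M j ++
        ([colF k N P β τ j] ++ Wrec k N P β τ M fresh fuel (j + 1)))
      refine ple_append ?_ (ple_append ?_ ?_)
      · have := ple_flatMap (i := i)
          (fun i' => if j + 1 ≤ β i' then segL k N P τ i' j else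
            if j = β i' then sufL k N P β τ M i' else []) (List.mem_finRange i)
        beta_reduce at this
        rw [if_pos hjβ'] at this
        rw [gapL]
        exact this
      · refine ple_singleton ?_
        intro a ha
        rw [colF, Finset.mem_biUnion]
        exact ⟨i, Finset.mem_univ i, by rw [if_pos hjβ']; exact ha⟩
      · exact ih (j + 1) (by omega) (by omega) i hjβ'

end Constr3
end St2

namespace St2
section SatBlock

variable {k : ℕ} {N : Fin k → ℕ} {P : Fin k → ℕ → Finset Atom}

lemma sat_block (ρ : Finset Atom) (word : List (Finset Atom)) (i : Fin k) (L : ℕ)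
    (hL : N i ≤ L) (hP0 : P i 0 = ∅)
    (hple : Ple ((List.range' 1 L).map (cI k N P i)) word) :
    Query.sat (instOf ρ word) (pathQ (N i) (P i) (fun _ => TOp.evtl)) 0 := by
  obtain ⟨f, hfmono, hfc⟩ := embL_of_ple hple
  rw [pathQ]
  refine (char _ (P i) (N i) 0 0).2
    ⟨fun l => if l = 0 then 0 else f (l - 1) + 1, by simp, ?_, ?_⟩
  · intro l hl
    beta_reduce
    rcases Nat.eq_zero_or_pos l with rfl | hp
    · rw [if_pos rfl, if_neg (by omega : ¬ (0 + 1 = 0))]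
      omega
    · rw [if_neg (by omega : ¬ (l = 0)), if_neg (by omega : ¬ (l + 1 = 0))]
      have := hfmono (show l - 1 < l + 1 - 1 by omega)
      omega
  · intro l hl a ha
    beta_reduce
    rw [Nat.zero_add] at ha
    rcases Nat.eq_zero_or_pos l with rfl | hp
    · rw [hP0] at ha
      cases (Finset.notMem_empty a ha)
    · rw [if_neg (by omega : ¬ (l = 0))]
      rw [mem_instOf_succ]
      refine hfc (l - 1) ?_
      have hcell : ((List.range' 1 L).map (cI k N P i)).getD (l - 1) ∅ = cI k N P i l := by
        have h' : l - 1 < (List.map (cI k N P i) (List.range' 1 L)).length := by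
          simp only [List.length_map, List.length_range']; omega
        rw [List.getD_eq_getElem _ _ h', List.getElem_map, List.getElem_range'_1]
        congr 1
        omega
      rw [hcell, cI, cF, if_pos ⟨hp, hl⟩]
      exact ha

end SatBlock
end St2

open St2

/-- If a `𝒬[◇]`-query `ρ ∧ q₁ ∧ ⋯ ∧ qₖ` in normal form (each `qᵢ` a
path ◇-query starting with ◇) entails a path ◇-query `q'`, then already `ρ ∧ qᵢ ⊨ q'`
for some `i`. -/
theorem statement_2 (ρ : Finset Atom) (k : ℕ) (hk : 1 ≤ k)
    (N : Fin k → ℕ) (P : Fin k → ℕ → Finset Atom)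
    (hN : ∀ i, 1 ≤ N i) (hP0 : ∀ i, P i 0 = ∅)
    (m : ℕ) (ρ' : ℕ → Finset Atom)
    (hent : Entails
      (Query.and (conjQ ρ)
        (bigAnd ((List.finRange k).map fun i => pathQ (N i) (P i) fun _ => TOp.evtl)))
      (pathQ m ρ' fun _ => TOp.evtl)) :
    ∃ i : Fin k,
      Entails (Query.and (conjQ ρ) (pathQ (N i) (P i) fun _ => TOp.evtl))
        (pathQ m ρ' fun _ => TOp.evtl) := by
  classical
  by_contra hcon
  push_neg at hcon
  by_cases hρ0 : ρ' 0 ⊆ ρ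
  · -- extract a stall package for each block
    have hstall : ∀ i, StallPkg (cF (N i) (P i)) (N i) m ρ' := by
      intro i
      rcases good_or_stall (cF (N i) (P i)) (N i) m ρ'
        (fun t ht => by rw [cF, if_neg (by omega)]) m le_rfl with good | stall
      · exact absurd (entails_of_good ρ (N i) m (P i) ρ' hρ0 good) (hcon i)
      · exact stall
    choose β hβ1 hβm hρne τ hτ0 hmono hgap hstl hbd using hstall
    have hkne : (Finset.univ : Finset (Fin k)).Nonempty := ⟨⟨0, hk⟩, Finset.mem_univ _⟩
    obtain ⟨i₀, -, hi₀⟩ := Finset.exists_mem_eq_sup' hkne β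
    set B := Finset.univ.sup' hkne β with hBdef
    have hB : ∀ i, β i ≤ B := fun i => Finset.le_sup' β (Finset.mem_univ i)
    have hB1 : 1 ≤ B := le_trans (hβ1 i₀) (hB i₀)
    have hBm : B ≤ m := by rw [hi₀]; exact hβm i₀
    have hρB : ρ' B ≠ ∅ := by rw [hi₀]; exact hρne i₀
    set M := Finset.univ.sup' hkne N + m + 1 with hMdef
    have hM : ∀ i, N i + m < M := by
      intro i
      have := Finset.le_sup' N (Finset.mem_univ i)
      omega
    set fresh := ((Finset.range (m + 1)).biUnion ρ').sup id + 1 with hfreshdef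
    have hfresh : ∀ a ∈ ρ' B, a < fresh := by
      intro a ha
      have hmem : a ∈ (Finset.range (m + 1)).biUnion ρ' :=
        Finset.mem_biUnion.2 ⟨B, Finset.mem_range.2 (by omega), ha⟩
      have hle := Finset.le_sup (f := id) hmem
      simp only [id_eq] at hle
      rw [hfreshdef]
      exact Nat.lt_succ_of_le hle
    -- convert the packages to `cI` form
    have hmono' : ∀ (i : Fin k) (l : ℕ), l + 1 ≤ β i - 1 → τ i l < τ i (l + 1) := hmono
    have hgap' : ∀ (i : Fin k) (l : ℕ), 1 ≤ l → l ≤ β i - 1 →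
        ∀ t, τ i (l - 1) < t → t < τ i l → ¬ ρ' l ⊆ cI k N P i t := by
      intro i l h1 h2 t h3 h4
      rw [cI]
      exact hgap i l h1 h2 t h3 h4
    have hstl' : ∀ (i : Fin k) (t : ℕ), τ i (β i - 1) < t → ¬ ρ' (β i) ⊆ cI k N P i t := by
      intro i t ht
      rw [cI]
      exact hstl i t ht
    set word := Wrec k N P β τ M fresh (B - 1) 1 with hworddef
    set u := instOf ρ word with hudef
    -- u is nonempty
    obtain ⟨pf, hpf, hpfe⟩ := List.mem_iff_getElem.1 (mem_fresh_Wrec k N P β τ M fresh (B - 1) 1)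
    have hfreshmem : (fresh, pf + 1) ∈ u := by
      rw [hudef, mem_instOf_succ, List.getD_eq_getElem _ _ hpf, hpfe]
      exact Finset.mem_singleton_self fresh
    have hune : u.Nonempty := ⟨(fresh, pf + 1), hfreshmem⟩
    -- u satisfies q
    have hsatq : Query.sat u
        (Query.and (conjQ ρ)
          (bigAnd ((List.finRange k).map fun i => pathQ (N i) (P i) fun _ => TOp.evtl))) 0 := by
      refine ⟨?_, ?_⟩
      · rw [sat_conjQ]
        intro a ha
        rw [hudef, mem_instOf_zero]
        exact ha
      · rw [sat_bigAnd]
        intro q hq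
        obtain ⟨i, -, rfl⟩ := List.mem_map.1 hq
        have hple : Ple (tailL k N P τ M i 1) word :=
          subW hβ1 hβm hmono' hbd hB hM (B - 1) 1 le_rfl (by omega) i (hβ1 i)
        have htail : tailL k N P τ M i 1 = (List.range' 1 M).map (cI k N P i) := by
          rw [tailL, show (1 : ℕ) - 1 = 0 from rfl, hτ0 i, Nat.zero_add, Nat.sub_zero]
        rw [htail] at hple
        exact sat_block ρ word i M (by have := hM i; omega) (hP0 i) hple
    -- hence u satisfies q', giving an embedding, contradiction with noemb
    have hsatq' := hent u hune hsatq
    rw [pathQ] at hsatq'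
    obtain ⟨g, hg0, hginc, hgc⟩ := (char u ρ' m 0 0).1 hsatq'
    have hgpos : ∀ l, l + 1 ≤ m → 1 ≤ g (l + 1) := by
      intro l
      induction l with
      | zero => intro h; have := hginc 0 (by omega); omega
      | succ l ihl =>
        intro h
        have h1 := ihl (by omega)
        have h2 := hginc (l + 1) (by omega)
        omega
    refine noemb (M := M) hβ1 hmono' hgap' hstl' hρB hfresh (B - 1) 1 le_rfl (by omega)
      (fun l => g (l + 1) - 1) ?_ ?_
    · intro l hl
      beta_reduce
      have h1 := hgpos l (by omega)
      have h2 := hginc (l + 1) (by omega)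
      omega
    · intro l hl a ha
      beta_reduce
      have h1 := hgpos l (by omega)
      have h2 := hgc (l + 1) (by omega) a (by rw [Nat.zero_add]; rwa [show 1 + l = l + 1 by omega] at ha)
      rw [hudef] at h2
      rw [show g (l + 1) = (g (l + 1) - 1) + 1 by omega, mem_instOf_succ] at h2
      exact h2
  · -- ρ' 0 ⊄ ρ : a simple concatenated model already refutes the entailment
    set word₀ : List (Finset Atom) :=
      ((List.finRange k).flatMap fun i => (List.range' 1 (N i)).map (cI k N P i)) ++
        [({0} : Finset Atom)] with hw0
    set u₀ := instOf ρ word₀ with hu0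
    have hmem0 : ({0} : Finset Atom) ∈ word₀ :=
      List.mem_append_right _ (List.mem_singleton.2 rfl)
    obtain ⟨pf, hpf, hpfe⟩ := List.mem_iff_getElem.1 hmem0
    have hune : u₀.Nonempty := by
      refine ⟨(0, pf + 1), ?_⟩
      rw [hu0, mem_instOf_succ, List.getD_eq_getElem _ _ hpf, hpfe]
      exact Finset.mem_singleton_self 0
    have hsatq : Query.sat u₀
        (Query.and (conjQ ρ)
          (bigAnd ((List.finRange k).map fun i => pathQ (N i) (P i) fun _ => TOp.evtl))) 0 := by
      refine ⟨?_, ?_⟩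
      · rw [sat_conjQ]
        intro a ha
        rw [hu0, mem_instOf_zero]
        exact ha
      · rw [sat_bigAnd]
        intro q hq
        obtain ⟨i, -, rfl⟩ := List.mem_map.1 hq
        refine sat_block ρ word₀ i (N i) le_rfl (hP0 i) ?_
        have hpm := ple_flatMap (f := fun i' => (List.range' 1 (N i')).map (cI k N P i'))
          (List.mem_finRange i)
        beta_reduce at hpm
        exact ple_extend_right _ hpm
    have hsatq' := hent u₀ hune hsatq
    rw [pathQ] at hsatq'
    obtain ⟨g, hg0, -, hgc⟩ := (char u₀ ρ' m 0 0).1 hsatq'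
    refine hρ0 ?_
    intro a ha
    have := hgc 0 (by omega) a (by rwa [Nat.add_zero])
    rw [hg0, hu0, mem_instOf_zero] at this
    exact this
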